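/- Let θ : ℝ → ℝ be differentiable at t₀ and let n(t) = (cos θ(t), sin θ(t)) be a point moving on the unit circle centred at the origin of ℝ². Let p : ℝ → ℝ² be differentiable at t₀, set x(t) = p(t) − n(t), and assume that for all t the tangency condition x(t) = ‖x(t)‖ • (−sin θ(t), cos θ(t)) holds with x(t) ≠ 0. Then the length function L(t) = θ(t) + ‖x(t)‖ of the CS-curve (circular arc of angle θ(t) followed by the straight segment from n(t) to p(t)) is differentiable at t₀ and L′(t₀) = ⟪p′(t₀), x(t₀)/‖x(t₀)‖⟫, i.e. the first variation of length is the scalar product of the direction of variation of the endpoint with the outward pointing unit vector along the segment. -/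

import Mathlib

open Real
open scoped InnerProductSpace

/-- The point of `EuclideanSpace ℝ (Fin 2)` with coordinates `a`, `b`. -/
def pt (a b : ℝ) : EuclideanSpace ℝ (Fin 2) := WithLp.toLp 2 ![a, b]

/-!
Along the tangency constraint `x = ‖x‖ • τ` with `τ` a unit vector, the length of the segment is
the linear quantity `⟪x, τ⟫`. Differentiating `θ + ⟪p - n, τ⟫` with `n' = θ' τ` and `τ' = -θ' n`,
the term `θ'` coming from the arc cancels the term `-⟪n', τ⟫ = -θ'` coming from the moving
junction point, while `⟪x, τ'⟫ = -θ' ‖x‖ ⟪τ, n⟫` vanishes by orthogonality. What remains is `⟪p', τ⟫`.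
-/

section TangentFrame

variable {E : Type*} [NormedAddCommGroup E] [InnerProductSpace ℝ E]

theorem norm_eq_inner_of_eq_norm_smul {x u : E} (hu : ⟪u, u⟫_ℝ = 1) (hx : x = ‖x‖ • u) :
    ‖x‖ = ⟪x, u⟫_ℝ := by
  conv_rhs => rw [hx]
  rw [real_inner_smul_left, hu, mul_one]

theorem inv_norm_smul_eq_of_eq_norm_smul {x u : E} (hx₀ : x ≠ 0) (hx : x = ‖x‖ • u) :
    ‖x‖⁻¹ • x = u := by
  calc ‖x‖⁻¹ • x = ‖x‖⁻¹ • (‖x‖ • u) := by rw [← hx]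
    _ = u := inv_smul_smul₀ (norm_ne_zero_iff.mpr hx₀) u

theorem hasDerivAt_add_norm_sub_of_tangent {θ : ℝ → ℝ} {θ' : ℝ} {p n τ : ℝ → E} {v : E}
    {t₀ : ℝ} (hθ : HasDerivAt θ θ' t₀) (hp : HasDerivAt p v t₀)
    (hn : HasDerivAt n (θ' • τ t₀) t₀) (hτ : HasDerivAt τ (-θ' • n t₀) t₀)
    (hτ_unit : ∀ t, ⟪τ t, τ t⟫_ℝ = 1) (horth : ⟪n t₀, τ t₀⟫_ℝ = 0)
    (htan : ∀ t, p t - n t = ‖p t - n t‖ • τ t) :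
    HasDerivAt (fun t => θ t + ‖p t - n t‖) ⟪v, τ t₀⟫_ℝ t₀ := by
  have hlen : (fun t => θ t + ‖p t - n t‖) = fun t => θ t + ⟪p t - n t, τ t⟫_ℝ := by
    funext t
    rw [← norm_eq_inner_of_eq_norm_smul (hτ_unit t) (htan t)]
  have hseg_orth : ⟪p t₀ - n t₀, n t₀⟫_ℝ = 0 := by
    rw [htan t₀, real_inner_smul_left, real_inner_comm, horth, mul_zero]
  rw [hlen]
  refine (hθ.add ((hp.sub hn).inner ℝ hτ)).congr_deriv ?_
  rw [Pi.sub_apply, inner_smul_right, hseg_orth, inner_sub_left, real_inner_smul_left, hτ_unit]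
  ring

end TangentFrame

section Plane

theorem smul_pt (c a b : ℝ) : c • pt a b = pt (c * a) (c * b) := by
  ext i; fin_cases i <;> simp [pt]

theorem inner_pt (a b c d : ℝ) : ⟪pt a b, pt c d⟫_ℝ = a * c + b * d := by
  simp [pt, PiLp.inner_apply, Fin.sum_univ_two, mul_comm]

theorem hasDerivAt_pt {a b : ℝ → ℝ} {a' b' t : ℝ} (ha : HasDerivAt a a' t)
    (hb : HasDerivAt b b' t) : HasDerivAt (fun s => pt (a s) (b s)) (pt a' b') t := by
  have hpt : ∀ x y : ℝ, pt x y = x • pt 1 0 + y • pt 0 1 := by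
    intro x y; ext i; fin_cases i <;> simp [pt]
  simpa only [← hpt] using (ha.smul_const (pt 1 0)).fun_add (hb.smul_const (pt 0 1))

variable {θ : ℝ → ℝ} {θ' t₀ : ℝ}

theorem hasDerivAt_pt_cos_sin (hθ : HasDerivAt θ θ' t₀) :
    HasDerivAt (fun t => pt (cos (θ t)) (sin (θ t)))
      (θ' • pt (-sin (θ t₀)) (cos (θ t₀))) t₀ := by
  rw [smul_pt]
  convert hasDerivAt_pt hθ.cos hθ.sin using 2 <;> ring

theorem hasDerivAt_pt_neg_sin_cos (hθ : HasDerivAt θ θ' t₀) :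
    HasDerivAt (fun t => pt (-sin (θ t)) (cos (θ t)))
      (-θ' • pt (cos (θ t₀)) (sin (θ t₀))) t₀ := by
  rw [smul_pt]
  convert hasDerivAt_pt hθ.sin.fun_neg hθ.cos using 2 <;> ring

end Plane

/-- **First variation of length of a CS-curve** (Proposition 1).
`θ t` is the arc angle, `n t = (cos θ t, sin θ t)` the junction point on the unit circle,
`p t` the moving endpoint, `x t = p t - n t` the straight segment, tangent to the circle.
Then `L t = θ t + ‖x t‖` is differentiable at `t₀` with derivative
`⟪p'(t₀), x(t₀)/‖x(t₀)‖⟫`. -/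
theorem first_variation_CS_curve
    (θ : ℝ → ℝ) (p : ℝ → EuclideanSpace ℝ (Fin 2)) (t₀ : ℝ)
    (v : EuclideanSpace ℝ (Fin 2))
    (hθ : DifferentiableAt ℝ θ t₀) (hp : HasDerivAt p v t₀)
    (htan : ∀ t : ℝ,
      p t - pt (Real.cos (θ t)) (Real.sin (θ t)) =
        ‖p t - pt (Real.cos (θ t)) (Real.sin (θ t))‖ •
          pt (-Real.sin (θ t)) (Real.cos (θ t)))
    (hne : ∀ t : ℝ, p t - pt (Real.cos (θ t)) (Real.sin (θ t)) ≠ 0) :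
    HasDerivAt
      (fun t => θ t + ‖p t - pt (Real.cos (θ t)) (Real.sin (θ t))‖)
      ⟪v, ‖p t₀ - pt (Real.cos (θ t₀)) (Real.sin (θ t₀))‖⁻¹ •
          (p t₀ - pt (Real.cos (θ t₀)) (Real.sin (θ t₀)))⟫_ℝ
      t₀ := by
  rw [inv_norm_smul_eq_of_eq_norm_smul (hne t₀) (htan t₀)]
  have hθ' := hθ.hasDerivAt
  refine hasDerivAt_add_norm_sub_of_tangent hθ' hp (hasDerivAt_pt_cos_sin hθ')
    (hasDerivAt_pt_neg_sin_cos hθ') (fun t => ?_) ?_ htan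
  · rw [inner_pt]; linarith [sin_sq_add_cos_sq (θ t)]
  · rw [inner_pt]; ring
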